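/- Let G be a finite 3-pyramidal group that is generated by its involutions. Then G is isomorphic to the symmetric group S_3. -/

import Mathlib

/-- A finite group is 3-pyramidal if it has exactly three involutions,
which are all conjugate to each other. -/
def IsThreePyramidal (G : Type*) [Group G] : Prop :=
  Nat.card {g : G | orderOf g = 2} = 3 ∧
    ∀ i j : G, orderOf i = 2 → orderOf j = 2 → IsConj i j

/-! Two distinct involutions `a`, `b` cannot commute: otherwise `a` would commute with all three
involutions `a`, `b`, `ab`, hence be central (the involutions generate `G`), contradicting that
it is conjugate to `b`. So `t = ab` is inverted by `a` and `a ∉ ⟨t⟩`, and the elements `n * a`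
with `n ∈ ⟨t⟩` are `orderOf t` distinct involutions. Hence `t` has order `3`, these are all the
involutions, `G = ⟨a, t⟩ = ⟨t⟩ ∪ ⟨t⟩a` has order `6`, and the conjugation action of `G` on its
three involutions, in which `a` and `t` act with orders `2` and `3`, is an isomorphism onto `S₃`. -/

open Subgroup

section Dihedral

variable {G : Type*} [Group G] {a t : G}

theorem conj_eq_inv_of_mem_zpowers (hat : a * t * a⁻¹ = t⁻¹) {n : G} (hn : n ∈ zpowers t) :
    a * n * a⁻¹ = n⁻¹ := by
  obtain ⟨k, rfl⟩ := mem_zpowers_iff.mp hn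
  rw [← conj_zpow, hat, inv_zpow]

theorem mul_self_eq_one_of_mem_zpowers (ha : a * a = 1) (hat : a * t * a⁻¹ = t⁻¹) {n : G}
    (hn : n ∈ zpowers t) : n * a * (n * a) = 1 := by
  have hconj := conj_eq_inv_of_mem_zpowers hat hn
  rw [inv_eq_of_mul_eq_one_right ha] at hconj
  rw [mul_assoc, ← mul_assoc a, hconj, mul_inv_cancel]

theorem orderOf_mul_eq_two_of_mem_zpowers (ha : a * a = 1) (hat : a * t * a⁻¹ = t⁻¹)
    (ht : a ∉ zpowers t) {n : G} (hn : n ∈ zpowers t) : orderOf (n * a) = 2 := by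
  refine orderOf_eq_prime ((sq _).trans (mul_self_eq_one_of_mem_zpowers ha hat hn)) ?_
  intro h
  exact ht (eq_inv_of_mul_eq_one_right h ▸ inv_mem hn)

theorem mem_zpowers_or_mul_mem_zpowers (ha : a * a = 1) (hat : a * t * a⁻¹ = t⁻¹) {x : G}
    (hx : x ∈ closure {a, t}) : x ∈ zpowers t ∨ x * a ∈ zpowers t := by
  have hainv : a⁻¹ = a := inv_eq_of_mul_eq_one_right ha
  have ha' (z : G) : a * (a * z) = z := by rw [← mul_assoc, ha, one_mul]
  have hconj {n : G} (hn : n ∈ zpowers t) : a * n * a ∈ zpowers t := by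
    have := conj_eq_inv_of_mem_zpowers hat hn
    rw [hainv] at this
    exact this ▸ inv_mem hn
  induction hx using closure_induction with
  | mem y hy =>
    rcases hy with rfl | rfl
    · exact .inr (ha ▸ one_mem _)
    · exact .inl (mem_zpowers y)
  | one => exact .inl (one_mem _)
  | mul x y _ _ hx hy =>
    rcases hx with hx | hx <;> rcases hy with hy | hy
    · exact .inl (mul_mem hx hy)
    · exact .inr (by rw [mul_assoc]; exact mul_mem hx hy)
    · refine .inr ?_
      rw [show x * y * a = x * a * (a * y * a) by simp only [mul_assoc, ha']]
      exact mul_mem hx (hconj hy)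
    · refine .inl ?_
      rw [show x * y = x * a * (a * (y * a) * a) by simp only [mul_assoc, ha', ha, mul_one]]
      exact mul_mem hx (hconj hy)
  | inv x _ hx =>
    rcases hx with hx | hx
    · exact .inl (inv_mem hx)
    · refine .inr ?_
      rw [show x⁻¹ * a = a * (x * a)⁻¹ * a by simp only [mul_inv_rev, hainv, ha']]
      exact hconj (inv_mem hx)

theorem image_mul_right_zpowers_subset (ha : a * a = 1) (hat : a * t * a⁻¹ = t⁻¹)
    (ht : a ∉ zpowers t) : (· * a) '' (zpowers t : Set G) ⊆ {g | orderOf g = 2} := by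
  rintro _ ⟨n, hn, rfl⟩
  exact orderOf_mul_eq_two_of_mem_zpowers ha hat ht hn

theorem ncard_image_mul_right_zpowers (a t : G) :
    ((· * a) '' (zpowers t : Set G)).ncard = orderOf t := by
  rw [Set.ncard_image_of_injective _ (mul_left_injective a), ← Nat.card_coe_set_eq,
    SetLike.coe_sort_coe, Nat.card_zpowers]

theorem index_zpowers_eq_two (ha : a * a = 1) (hat : a * t * a⁻¹ = t⁻¹) (ht : a ∉ zpowers t)
    (hgen : closure {a, t} = ⊤) : (zpowers t).index = 2 := by
  refine index_eq_two_iff.mpr ⟨a, fun x => ?_⟩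
  have hboth : ¬(x * a ∈ zpowers t ∧ x ∈ zpowers t) := fun ⟨hxa, hx⟩ =>
    ht (by simpa using mul_mem (inv_mem hx) hxa)
  rcases mem_zpowers_or_mul_mem_zpowers ha hat (hgen ▸ mem_top x) with hx | hx
  · exact .inr ⟨hx, fun hxa => hboth ⟨hxa, hx⟩⟩
  · exact .inl ⟨hx, fun hx' => hboth ⟨hx, hx'⟩⟩

end Dihedral

section Involutions

variable {G : Type*} [Group G] {a b : G}

theorem mul_self_eq_one_of_orderOf_eq_two (ha : orderOf a = 2) : a * a = 1 := by
  rw [← sq, ← ha, pow_orderOf_eq_one]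

theorem conj_mul_eq_inv (ha : a * a = 1) (hb : b * b = 1) : a * (a * b) * a⁻¹ = (a * b)⁻¹ := by
  rw [mul_inv_rev, inv_eq_of_mul_eq_one_right ha, inv_eq_of_mul_eq_one_right hb, ← mul_assoc,
    ha, one_mul]

theorem notMem_zpowers_mul (hab : ¬Commute a b) : a ∉ zpowers (a * b) := by
  intro h
  obtain ⟨k, hk⟩ := mem_zpowers_iff.mp h
  have hc : Commute ((a * b) ^ k) (a * b) := (Commute.refl (a * b)).zpow_left k
  rw [hk] at hc
  exact hab ((IsLeftRegular.all a).commute_mul_left_iff.mp hc.symm)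

theorem image_mul_right_zpowers_mul_subset (ha : orderOf a = 2) (hb : orderOf b = 2)
    (hab : ¬Commute a b) :
    (· * a) '' (zpowers (a * b) : Set G) ⊆ {g | orderOf g = 2} :=
  have ha2 := mul_self_eq_one_of_orderOf_eq_two ha
  image_mul_right_zpowers_subset ha2 (conj_mul_eq_inv ha2 (mul_self_eq_one_of_orderOf_eq_two hb))
    (notMem_zpowers_mul hab)

variable (G) in
def involutions : SubMulAction (ConjAct G) G where
  carrier := {g | orderOf g = 2}
  smul_mem' c g hg := by
    rw [Set.mem_ofPred_eq, ConjAct.smul_def, ← hg]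
    exact (MulAut.conj (ConjAct.ofConjAct c)).orderOf_eq g

variable (G) in
def conjInvolutions : G →* Equiv.Perm (involutions G) :=
  (MulAction.toPermHom (ConjAct G) (involutions G)).comp ConjAct.toConjAct.toMonoidHom

theorem conjInvolutions_apply_coe (g : G) (x : involutions G) :
    (conjInvolutions G g x : G) = g * x * g⁻¹ :=
  rfl

theorem conjInvolutions_ne_one {g x : G} (hx : orderOf x = 2) (hgx : ¬Commute g x) :
    conjInvolutions G g ≠ 1 := by
  intro h
  have hfix : (conjInvolutions G g ⟨x, hx⟩ : G) = x := by rw [h]; rfl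
  rw [conjInvolutions_apply_coe, mul_inv_eq_iff_eq_mul] at hfix
  exact hgx hfix

theorem orderOf_map_eq_prime {H : Type*} [Group H] (f : G →* H) {p : ℕ} [Fact p.Prime]
    (ha : orderOf a = p) (hfa : f a ≠ 1) : orderOf (f a) = p :=
  orderOf_eq_prime (by rw [← map_pow, ← ha, pow_orderOf_eq_one, map_one]) hfa

theorem MonoidHom.bijective_of_coprime_orderOf {H : Type*} [Group H] [Finite G] [Finite H]
    (f : G →* H) {p q : ℕ} (hpq : p.Coprime q) (hG : Nat.card G = p * q)
    (hH : Nat.card H = p * q) (hfa : orderOf (f a) = p) (hfb : orderOf (f b) = q) :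
    Function.Bijective f := by
  have hdvd : p * q ∣ Nat.card f.range := hpq.mul_dvd_of_dvd_of_dvd
    (hfa ▸ f.range.orderOf_dvd_natCard ⟨a, rfl⟩)
    (hfb ▸ f.range.orderOf_dvd_natCard ⟨b, rfl⟩)
  have hrange : f.range = ⊤ := by
    rw [← card_eq_iff_eq_top]
    exact le_antisymm (card_le_card_group _) (hH ▸ Nat.le_of_dvd Nat.card_pos hdvd)
  exact (Nat.bijective_iff_surjective_and_card f).mpr
    ⟨MonoidHom.range_eq_top.mp hrange, hG.trans hH.symm⟩

end Involutions

namespace IsThreePyramidal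

variable {G : Type*} [Group G]

theorem exists_involutions_ne (hG : IsThreePyramidal G) :
    ∃ a b : G, orderOf a = 2 ∧ orderOf b = 2 ∧ a ≠ b := by
  obtain ⟨a, b, c, hab, -, -, hS⟩ := Set.ncard_eq_three.mp (Nat.card_coe_set_eq _ ▸ hG.1)
  exact ⟨a, b, hS.symm.subset (by simp), hS.symm.subset (by simp), hab⟩

variable [Finite G] {a b : G}

theorem not_commute (hG : IsThreePyramidal G) (hgen : closure {g : G | orderOf g = 2} = ⊤)
    (ha : orderOf a = 2) (hb : orderOf b = 2) (hab : a ≠ b) : ¬Commute a b := by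
  intro hc
  have hnotMem := mul_notMem_of_orderOf_eq_two ha hb hab
  simp only [Set.mem_insert_iff, Set.mem_singleton_iff, not_or] at hnotMem
  obtain ⟨hne_a, hne_b, hne_one⟩ := hnotMem
  have hab2 : orderOf (a * b) = 2 := orderOf_eq_prime (by
    rw [hc.mul_pow, sq, sq, mul_self_eq_one_of_orderOf_eq_two ha,
      mul_self_eq_one_of_orderOf_eq_two hb, one_mul]) hne_one
  have hS : {g : G | orderOf g = 2} = {a, b, a * b} := by
    refine (Set.eq_of_subset_of_ncard_le ?_ ?_ (Set.toFinite _)).symm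
    · simp only [Set.insert_subset_iff, Set.singleton_subset_iff]
      exact ⟨ha, hb, hab2⟩
    · rw [← Nat.card_coe_set_eq, hG.1, Set.ncard_eq_three.mpr ⟨a, b, a * b, hab, ?_, ?_, rfl⟩]
      exacts [Ne.symm hne_a, Ne.symm hne_b]
  have hcentral : a ∈ centralizer (closure {g : G | orderOf g = 2}) := by
    rw [centralizer_closure, mem_centralizer_iff, hS]
    rintro _ (rfl | rfl | rfl)
    exacts [rfl, hc.symm.eq, ((Commute.refl a).mul_left hc.symm).eq]
  rw [hgen] at hcentral
  obtain ⟨c, hca⟩ := isConj_iff.mp (hG.2 a b ha hb)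
  exact hab (by rw [← hca, mem_centralizer_iff.mp hcentral c (mem_top c), mul_inv_cancel_right])

theorem orderOf_mul_eq_three (hG : IsThreePyramidal G)
    (hgen : closure {g : G | orderOf g = 2} = ⊤) (ha : orderOf a = 2) (hb : orderOf b = 2)
    (hab : a ≠ b) : orderOf (a * b) = 3 := by
  have hnc := hG.not_commute hgen ha hb hab
  have hle : orderOf (a * b) ≤ 3 := by
    rw [← ncard_image_mul_right_zpowers a, ← hG.1, Nat.card_coe_set_eq]
    exact Set.ncard_le_ncard (image_mul_right_zpowers_mul_subset ha hb hnc) (Set.toFinite _)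
  have hne1 : orderOf (a * b) ≠ 1 := fun h =>
    mul_notMem_of_orderOf_eq_two ha hb hab (by simp [orderOf_eq_one_iff.mp h])
  have hne2 : orderOf (a * b) ≠ 2 := by
    intro h
    have hinv := inv_eq_self_of_orderOf_eq_two h
    rw [mul_inv_rev, inv_eq_self_of_orderOf_eq_two ha, inv_eq_self_of_orderOf_eq_two hb] at hinv
    exact hnc hinv.symm
  have := orderOf_pos (a * b)
  omega

theorem closure_pair_eq_top (hG : IsThreePyramidal G)
    (hgen : closure {g : G | orderOf g = 2} = ⊤) (ha : orderOf a = 2) (hb : orderOf b = 2)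
    (hab : a ≠ b) : closure {a, a * b} = ⊤ := by
  have hS : (· * a) '' (zpowers (a * b) : Set G) = {g : G | orderOf g = 2} := by
    refine Set.eq_of_subset_of_ncard_le
      (image_mul_right_zpowers_mul_subset ha hb (hG.not_commute hgen ha hb hab)) ?_
      (Set.toFinite _)
    rw [ncard_image_mul_right_zpowers, hG.orderOf_mul_eq_three hgen ha hb hab,
      ← Nat.card_coe_set_eq, hG.1]
  rw [eq_top_iff, ← hgen, closure_le, ← hS]
  rintro _ ⟨n, hn, rfl⟩
  exact mul_mem (zpowers_le.mpr (subset_closure (by simp)) hn) (subset_closure (by simp))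

theorem card_eq_six (hG : IsThreePyramidal G) (hgen : closure {g : G | orderOf g = 2} = ⊤) :
    Nat.card G = 6 := by
  obtain ⟨a, b, ha, hb, hab⟩ := hG.exists_involutions_ne
  have ha2 := mul_self_eq_one_of_orderOf_eq_two ha
  have hb2 := mul_self_eq_one_of_orderOf_eq_two hb
  have hindex : (zpowers (a * b)).index = 2 :=
    index_zpowers_eq_two ha2 (conj_mul_eq_inv ha2 hb2)
      (notMem_zpowers_mul (hG.not_commute hgen ha hb hab)) (hG.closure_pair_eq_top hgen ha hb hab)
  rw [← card_mul_index (zpowers (a * b)), Nat.card_zpowers,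
    hG.orderOf_mul_eq_three hgen ha hb hab, hindex]

end IsThreePyramidal

theorem stmt_5 {G : Type*} [Group G] [Finite G] (hG : IsThreePyramidal G)
    (hgen : Subgroup.closure {g : G | orderOf g = 2} = ⊤) :
    Nonempty (G ≃* Equiv.Perm (Fin 3)) := by
  obtain ⟨a, b, ha, hb, hab⟩ := hG.exists_involutions_ne
  have hnc := hG.not_commute hgen ha hb hab
  have hcard : Nat.card (involutions G) = 3 := hG.1
  have hψ : Function.Bijective (conjInvolutions G) := by
    refine (conjInvolutions G).bijective_of_coprime_orderOf (p := 2) (q := 3) (by norm_num)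
      (hG.card_eq_six hgen) (by rw [Nat.card_perm, hcard]; rfl)
      (orderOf_map_eq_prime _ ha (conjInvolutions_ne_one hb hnc))
      (orderOf_map_eq_prime _ (hG.orderOf_mul_eq_three hgen ha hb hab)
        (conjInvolutions_ne_one ha fun h => hnc ((IsLeftRegular.all a).commute_mul_left_iff.mp h)))
  exact ⟨(MulEquiv.ofBijective _ hψ).trans (Finite.equivFinOfCardEq hcard).permCongrHom⟩
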